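/- For x ∈ V(ℝ) with Q(x) ≠ 0, the set D_x = {z ∈ D : (x, w(z)) = 0} has exactly two elements if Q(x) > 0, and is empty if Q(x) < 0. -/

import Mathlib

open Matrix

/-- `w(z) = [[z, -z²],[1, -z]]`, a representative of the point of `D` attached to
`z ∈ ℂ∖ℝ`. -/
noncomputable def wvec (z : ℂ) : Matrix (Fin 2) (Fin 2) ℂ := !![z, -z ^ 2; 1, -z]

/-- The ℂ-bilinear extension `(x,y) = tr(x·yᶥ)`, `yᶥ = tr(y)·1 - y`. -/
noncomputable def cpair (x y : Matrix (Fin 2) (Fin 2) ℂ) : ℂ :=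
  Matrix.trace (x * (Matrix.trace y • (1 : Matrix (Fin 2) (Fin 2) ℂ) - y))

/-
Write `x = [[a, b], [c, -a]]`. Then `(x, w(z)) = c z² - 2 a z - b` is a real quadratic in `z`
whose discriminant is `4 (a² + b c) = -4 Q(x)`. If `Q(x) > 0` then `c ≠ 0` and the two roots
`(a ± i √Q(x)) / c` are non-real and conjugate. If `z` is a non-real root, comparing real and
imaginary parts gives `c · Re z = a` and then `Q(x) = (c · Im z)² ≥ 0`, so `Q(x) < 0` leaves no root.
-/

open Complex ComplexConjugate

theorem Matrix.det_fin_two_of_trace_eq_zero {R : Type*} [CommRing R]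
    {A : Matrix (Fin 2) (Fin 2) R} (htr : A.trace = 0) : A.det = -A 0 0 ^ 2 - A 0 1 * A 1 0 := by
  rw [trace_fin_two] at htr
  rw [det_fin_two, eq_neg_of_add_eq_zero_right htr]
  ring

theorem Matrix.entry_one_zero_ne_zero_of_trace_eq_zero_of_det_pos {R : Type*} [CommRing R]
    [LinearOrder R] [IsStrictOrderedRing R] {A : Matrix (Fin 2) (Fin 2) R} (htr : A.trace = 0)
    (hdet : 0 < A.det) : A 1 0 ≠ 0 := by
  intro hc
  rw [det_fin_two_of_trace_eq_zero htr, hc] at hdet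
  nlinarith [sq_nonneg (A 0 0)]

section

variable {x : Matrix (Fin 2) (Fin 2) ℝ}

theorem cpair_map_ofReal_wvec (htr : x.trace = 0) (z : ℂ) :
    cpair (x.map ofReal) (wvec z) = x 1 0 * (z * z) + -2 * x 0 0 * z + -x 0 1 := by
  rw [trace_fin_two] at htr
  have h11 : x 1 1 = -x 0 0 := by linarith
  simp only [cpair, wvec, trace_fin_two, of_apply, cons_val', cons_val_zero, cons_val_fin_one,
    cons_val_one, add_neg_cancel, zero_smul, zero_sub, neg_of, neg_cons, neg_neg, neg_empty,
    mul_apply, map_apply, Fin.sum_univ_two, mul_neg, mul_one, h11, ofReal_neg, neg_mul]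
  ring

theorem det_eq_sq_of_cpair_map_ofReal_wvec_eq_zero (htr : x.trace = 0) {z : ℂ}
    (him : z.im ≠ 0) (hz : cpair (x.map ofReal) (wvec z) = 0) :
    x.det = (x 1 0 * z.im) ^ 2 := by
  rw [cpair_map_ofReal_wvec htr, Complex.ext_iff] at hz
  simp only [add_re, add_im, mul_re, mul_im, ofReal_re, ofReal_im, neg_re, neg_im, re_ofNat,
    im_ofNat, zero_re, zero_im, mul_zero, zero_mul, sub_zero, add_zero, neg_zero] at hz
  obtain ⟨hre, him'⟩ := hz
  have hcre : x 1 0 * z.re = x 0 0 := by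
    have : z.im * (2 * (x 1 0 * z.re - x 0 0)) = 0 := by linear_combination him'
    linarith [(mul_eq_zero.mp this).resolve_left him]
  rw [det_fin_two_of_trace_eq_zero htr]
  linear_combination x 1 0 * hre + (x 0 0 - x 1 0 * z.re) * hcre

noncomputable def cpairRoot (x : Matrix (Fin 2) (Fin 2) ℝ) : ℂ :=
  (x 0 0 + √x.det * I) / x 1 0

theorem cpairRoot_im_ne_zero (htr : x.trace = 0) (hdet : 0 < x.det) : (cpairRoot x).im ≠ 0 := by
  rw [cpairRoot, div_ofReal_im, add_im, ofReal_im, mul_I_im, ofReal_re, zero_add]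
  exact div_ne_zero (Real.sqrt_pos.mpr hdet).ne'
    (entry_one_zero_ne_zero_of_trace_eq_zero_of_det_pos htr hdet)

theorem cpair_map_ofReal_wvec_eq_zero_iff (htr : x.trace = 0) (hdet : 0 < x.det) (z : ℂ) :
    cpair (x.map ofReal) (wvec z) = 0 ↔ z = cpairRoot x ∨ z = conj (cpairRoot x) := by
  have hc : (x 1 0 : ℂ) ≠ 0 :=
    ofReal_ne_zero.mpr (entry_one_zero_ne_zero_of_trace_eq_zero_of_det_pos htr hdet)
  have hdisc :
      discrim (x 1 0 : ℂ) (-2 * x 0 0) (-x 0 1) = (2 * √x.det * I) * (2 * √x.det * I) := by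
    have hsq : ((√x.det : ℝ) : ℂ) ^ 2 = x.det := by exact_mod_cast Real.sq_sqrt hdet.le
    have hdet' : (x.det : ℂ) = -x 0 0 ^ 2 - x 0 1 * x 1 0 := by
      exact_mod_cast det_fin_two_of_trace_eq_zero htr
    rw [discrim]
    linear_combination 4 * hsq + 4 * hdet' - 4 * ((√x.det : ℝ) : ℂ) ^ 2 * I_sq
  rw [cpair_map_ofReal_wvec htr, quadratic_eq_zero_iff hc hdisc]
  have hconj : conj (cpairRoot x) = (x 0 0 - √x.det * I) / x 1 0 := by
    simp only [cpairRoot, map_div₀, map_add, conj_ofReal, map_mul, conj_I, mul_neg]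
    ring
  rw [hconj, cpairRoot]
  congr! 2 <;> field_simp

end

/-- for `x ∈ V(ℝ)` with `Q(x) = det x ≠ 0`, the set
`D_x = {z ∈ D : (x, w(z)) = 0}` (with `D` identified with `ℂ∖ℝ`) has exactly two
elements if `Q(x) > 0` and is empty if `Q(x) < 0`. -/
theorem Dx_two_points_or_empty (x : Matrix (Fin 2) (Fin 2) ℝ)
    (htr : Matrix.trace x = 0) :
    (0 < x.det → ∃ z₁ z₂ : ℂ, z₁ ≠ z₂ ∧
      {z : ℂ | z.im ≠ 0 ∧ cpair (x.map Complex.ofReal) (wvec z) = 0} = {z₁, z₂}) ∧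
    (x.det < 0 →
      {z : ℂ | z.im ≠ 0 ∧ cpair (x.map Complex.ofReal) (wvec z) = 0} = ∅) := by
  refine ⟨fun hdet => ?_, fun hdet => ?_⟩
  · have him := cpairRoot_im_ne_zero htr hdet
    refine ⟨cpairRoot x, conj (cpairRoot x), fun h => him ?_, ?_⟩
    · linarith [congrArg im h, conj_im (cpairRoot x)]
    ext z
    rw [Set.mem_ofPred_eq, cpair_map_ofReal_wvec_eq_zero_iff htr hdet, Set.mem_insert_iff,
      Set.mem_singleton_iff]
    refine ⟨And.right, fun hz => ⟨?_, hz⟩⟩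
    rcases hz with rfl | rfl <;> simpa using him
  · refine Set.eq_empty_of_forall_notMem fun z ⟨him, hz⟩ => ?_
    have := det_eq_sq_of_cpair_map_ofReal_wvec_eq_zero htr him hz
    nlinarith [sq_nonneg (x 1 0 * z.im)]
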